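/- arXiv:2510.06659 — 2 statements merged into one kernel-verified Lean document; each statement's English description precedes it below -/
import Mathlib

section
/- Let Y ⊆ F₂^n be a spanning set with |Y| ≤ ρ·n² for a constant ρ ∈ (0,1/2). Define the Y-weight of w ∈ F₂^n as the minimum size of a subset S ⊆ Y with w = Σ_{s∈S} s. Then for any f ∈ (0,1), the number of vectors of Y-weight at most f·n/log n is at most 2^{6fn} for all sufficiently large n. -/
/-- Let `Y ⊆ F₂ⁿ` be a spanning set with `|Y| ≤ ρ·n²` for a constant
`ρ ∈ (0,1/2)`. The `Y`-weight of `w` is the minimum size of a subset `S ⊆ Y` with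
`w = Σ_{s∈S} s`.  Then for any `f ∈ (0,1)`, the number of vectors of `Y`-weight at most
`f·n/log n` is at most `2^{6fn}` for all sufficiently large `n`.
(The set of vectors of `Y`-weight at most `t` is expressed as the set of `w` admitting a
representation `w = Σ_{s∈S} s` with `S ⊆ Y` and `|S| ≤ t`.) -/
theorem stmt_1 (ρ f : ℝ) (hρ : ρ ∈ Set.Ioo (0:ℝ) (1/2)) (hf : f ∈ Set.Ioo (0:ℝ) 1) :
    ∃ N₀ : ℕ, ∀ n ≥ N₀, ∀ Y : Finset (Fin n → ZMod 2),
      Submodule.span (ZMod 2) (Y : Set (Fin n → ZMod 2)) = ⊤ →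
      ((Y.card : ℝ) ≤ ρ * (n : ℝ) ^ 2) →
      ((Set.ncard {w : Fin n → ZMod 2 |
          ∃ S : Finset (Fin n → ZMod 2), S ⊆ Y ∧ (∑ s ∈ S, s) = w ∧
            (S.card : ℝ) ≤ f * n / Real.log n} : ℕ) : ℝ)
        ≤ (2 : ℝ) ^ (6 * f * n) := by
  obtain ⟨hρ0, hρ2⟩ := hρ
  obtain ⟨hf0, hf1⟩ := hf
  have hlog : ∀ᶠ n : ℕ in Filter.atTop, Real.log n ≤ f * n := by
    have h := Real.isLittleO_log_id_atTop.def hf0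
    have h2 := (tendsto_natCast_atTop_atTop (R := ℝ)).eventually h
    filter_upwards [h2, Filter.eventually_ge_atTop 1] with n hn hn1
    have h1 : (1:ℝ) ≤ (n:ℝ) := by exact_mod_cast hn1
    rw [Real.norm_eq_abs, id, Real.norm_eq_abs, abs_of_nonneg (Real.log_nonneg h1),
      abs_of_nonneg (by linarith : (0:ℝ) ≤ (n:ℝ))] at hn
    exact hn
  obtain ⟨N₁, hN₁⟩ := Filter.eventually_atTop.mp hlog
  refine ⟨max N₁ 3, fun n hn Y _ hYcard => ?_⟩
  have hn3 : 3 ≤ n := le_trans (le_max_right _ _) hn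
  have hnR : (3:ℝ) ≤ (n:ℝ) := by exact_mod_cast hn3
  have hn0 : (0:ℝ) < (n:ℝ) := by linarith
  have hlog1 : 1 ≤ Real.log n := by
    rw [Real.le_log_iff_exp_le hn0]
    have := Real.exp_one_lt_d9
    linarith
  have hlogpos : 0 < Real.log n := by linarith
  have hfn : Real.log n ≤ f * n := hN₁ n (le_trans (le_max_left _ _) hn)
  set m : ℕ := ⌊f * n / Real.log n⌋₊ with hm
  have hx0 : 0 ≤ f * n / Real.log n := by positivity
  have hmle : (m:ℝ) * Real.log n ≤ f * n := by
    have hfl := Nat.floor_le hx0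
    calc (m:ℝ) * Real.log n ≤ (f * n / Real.log n) * Real.log n :=
          mul_le_mul_of_nonneg_right hfl hlogpos.le
      _ = f * n := by field_simp
  have hmn : (m:ℝ) ≤ (n:ℝ) := by nlinarith
  set T := (Y.powerset.filter (fun S => S.card ≤ m)).image
    (fun S : Finset (Fin n → ZMod 2) => ∑ s ∈ S, s) with hT
  have hset : {w : Fin n → ZMod 2 |
      ∃ S : Finset (Fin n → ZMod 2), S ⊆ Y ∧ (∑ s ∈ S, s) = w ∧
        (S.card : ℝ) ≤ f * n / Real.log n} = ↑T := by
    ext w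
    simp only [Set.mem_setOf_eq, hT, Finset.coe_image, Set.mem_image, Finset.mem_coe,
      Finset.mem_filter, Finset.mem_powerset]
    constructor
    · rintro ⟨S, hS, hsum, hcard⟩
      exact ⟨S, ⟨hS, Nat.le_floor hcard⟩, hsum⟩
    · rintro ⟨S, ⟨hS, hcard⟩, hsum⟩
      exact ⟨S, hS, hsum,
        le_trans (by exact_mod_cast hcard : (S.card : ℝ) ≤ (m : ℝ)) (Nat.floor_le hx0)⟩
  have hNn : Y.card ≤ n ^ 2 := by
    have h2 : (Y.card : ℝ) ≤ (n:ℝ)^2 := by nlinarith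
    exact_mod_cast h2
  have hm1n : m + 1 ≤ n ^ 2 := by
    have h3 : (m:ℝ) + 1 ≤ (n:ℝ)^2 := by nlinarith
    exact_mod_cast h3
  have hsub : (Y.powerset.filter (fun S => S.card ≤ m)) ⊆
      (Finset.range (m+1)).biUnion (fun k => Y.powersetCard k) := by
    intro S hS
    rw [Finset.mem_filter, Finset.mem_powerset] at hS
    rw [Finset.mem_biUnion]
    exact ⟨S.card, Finset.mem_range.mpr (Nat.lt_succ_of_le hS.2),
      Finset.mem_powersetCard.mpr ⟨hS.1, rfl⟩⟩
  have hbig : T.card ≤ (n^2)^(m+1) := by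
    calc T.card ≤ (Y.powerset.filter (fun S => S.card ≤ m)).card := Finset.card_image_le
      _ ≤ ((Finset.range (m+1)).biUnion (fun k => Y.powersetCard k)).card :=
          Finset.card_le_card hsub
      _ ≤ ∑ k ∈ Finset.range (m+1), (Y.powersetCard k).card := Finset.card_biUnion_le
      _ ≤ ∑ _k ∈ Finset.range (m+1), (n^2)^m := by
          refine Finset.sum_le_sum fun k hk => ?_
          rw [Finset.card_powersetCard]
          calc Y.card.choose k ≤ Y.card ^ k := Nat.choose_le_pow _ _
            _ ≤ (n^2) ^ k := Nat.pow_le_pow_left hNn k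
            _ ≤ (n^2) ^ m := Nat.pow_le_pow_right (by nlinarith [hn3] : 1 ≤ n^2)
                (Nat.lt_succ_iff.mp (Finset.mem_range.mp hk))
      _ = (m+1) * (n^2)^m := by rw [Finset.sum_const, Finset.card_range, smul_eq_mul]
      _ ≤ (n^2) * (n^2)^m := Nat.mul_le_mul_right _ hm1n
      _ = (n^2)^(m+1) := by ring
  rw [hset, Set.ncard_coe_finset]
  have key : ((m:ℝ)+1)*(2*Real.log n) ≤ Real.log 2 * (6 * f * n) := by
    have hl2 : (0.6931471803 : ℝ) < Real.log 2 := Real.log_two_gt_d9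
    nlinarith [mul_pos hf0 hn0]
  have hR : (((n^2)^(m+1) : ℕ) : ℝ) ≤ (2:ℝ) ^ (6 * f * n) := by
    have hcast : (((n^2)^(m+1) : ℕ) : ℝ) = ((n:ℝ)^2)^(m+1) := by push_cast; ring
    rw [hcast]
    have hpos : (0:ℝ) < ((n:ℝ)^2)^(m+1) := by positivity
    rw [← Real.exp_log hpos, Real.rpow_def_of_pos (by norm_num : (0:ℝ) < 2)]
    apply Real.exp_le_exp.mpr
    rw [Real.log_pow, Real.log_pow]
    push_cast
    calc ((m:ℝ)+1) * (2 * Real.log n) ≤ Real.log 2 * (6 * f * n) := key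
      _ = Real.log 2 * (6 * f * n) := rfl
  calc (T.card : ℝ) ≤ (((n^2)^(m+1) : ℕ) : ℝ) := by exact_mod_cast hbig
    _ ≤ (2:ℝ) ^ (6 * f * n) := hR
end

section
/- For 0 < m ≤ N/2, the partial sum of binomial coefficients satisfies Σ_{k=0}^{m} C(N,k) ≤ 2^{N·H₂(m/N)}, where H₂(p) = -p·log₂(p) - (1-p)·log₂(1-p) is the binary entropy function. -/
/-- The binary entropy function `H₂(p) = -p·log₂ p - (1-p)·log₂(1-p)`. -/
noncomputable def binEnt (p : ℝ) : ℝ := -(p * Real.logb 2 p) - (1 - p) * Real.logb 2 (1 - p)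

/-- For `0 < m ≤ N/2`, `Σ_{k=0}^{m} C(N,k) ≤ 2^{N·H₂(m/N)}`. -/
theorem stmt_2 (N m : ℕ) (hm : 0 < m) (hmN : 2 * m ≤ N) :
    (∑ k ∈ Finset.range (m + 1), (N.choose k : ℝ))
      ≤ (2 : ℝ) ^ ((N : ℝ) * binEnt ((m : ℝ) / (N : ℝ))) := by
  have hN : 0 < N := lt_of_lt_of_le (by omega) hmN
  have hmN' : m ≤ N := by omega
  have hNR : (0:ℝ) < N := by exact_mod_cast hN
  set p : ℝ := (m:ℝ) / N with hp_def
  have hp0 : 0 < p := div_pos (by exact_mod_cast hm) hNR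
  have hp2 : p ≤ 1/2 := by
    rw [hp_def, div_le_iff₀ hNR]
    have : (2:ℝ) * m ≤ N := by exact_mod_cast hmN
    linarith
  have h1p : 0 < 1 - p := by linarith
  have hple : p ≤ 1 - p := by linarith
  have hNp : (N:ℝ) * p = m := by
    rw [hp_def]; field_simp
  have hN1p : (N:ℝ) * (1 - p) = ((N - m : ℕ) : ℝ) := by
    have : ((N - m : ℕ) : ℝ) = (N:ℝ) - m := by
      push_cast [hmN']; ring
    rw [this, mul_sub, mul_one, hNp]
  -- positivity of the weight
  have hw : 0 < p ^ m * (1 - p) ^ (N - m) := by positivity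
  -- key inequality
  have key : (∑ k ∈ Finset.range (m + 1), (N.choose k : ℝ)) * (p ^ m * (1 - p) ^ (N - m)) ≤ 1 := by
    rw [Finset.sum_mul]
    have step1 : ∀ k ∈ Finset.range (m + 1),
        (N.choose k : ℝ) * (p ^ m * (1 - p) ^ (N - m))
          ≤ p ^ k * (1 - p) ^ (N - k) * (N.choose k : ℝ) := by
      intro k hk
      rw [Finset.mem_range] at hk
      have hkm : k ≤ m := by omega
      have hterm : p ^ m * (1 - p) ^ (N - m) ≤ p ^ k * (1 - p) ^ (N - k) := by
        have e1 : p ^ m = p ^ k * p ^ (m - k) := by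
          rw [← pow_add]; congr 1; omega
        have e2 : (1 - p) ^ (N - k) = (1 - p) ^ (m - k) * (1 - p) ^ (N - m) := by
          rw [← pow_add]; congr 1; omega
        rw [e1, e2]
        have h3 : p ^ (m - k) ≤ (1 - p) ^ (m - k) :=
          pow_le_pow_left₀ hp0.le hple _
        calc p ^ k * p ^ (m - k) * (1 - p) ^ (N - m)
            ≤ p ^ k * (1 - p) ^ (m - k) * (1 - p) ^ (N - m) := by
              have := mul_le_mul_of_nonneg_left h3 (pow_nonneg hp0.le k)
              nlinarith [pow_nonneg h1p.le (N - m)]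
          _ = p ^ k * ((1 - p) ^ (m - k) * (1 - p) ^ (N - m)) := by ring
      calc (N.choose k : ℝ) * (p ^ m * (1 - p) ^ (N - m))
          ≤ (N.choose k : ℝ) * (p ^ k * (1 - p) ^ (N - k)) := by
            exact mul_le_mul_of_nonneg_left hterm (Nat.cast_nonneg _)
        _ = p ^ k * (1 - p) ^ (N - k) * (N.choose k : ℝ) := by ring
    calc ∑ k ∈ Finset.range (m + 1), (N.choose k : ℝ) * (p ^ m * (1 - p) ^ (N - m))
        ≤ ∑ k ∈ Finset.range (m + 1), p ^ k * (1 - p) ^ (N - k) * (N.choose k : ℝ) :=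
          Finset.sum_le_sum step1
      _ ≤ ∑ k ∈ Finset.range (N + 1), p ^ k * (1 - p) ^ (N - k) * (N.choose k : ℝ) := by
          apply Finset.sum_le_sum_of_subset_of_nonneg
          · exact Finset.range_subset_range.2 (by omega)
          · intro i _ _; positivity
      _ = (p + (1 - p)) ^ N := (add_pow p (1 - p) N).symm
      _ = 1 := by norm_num
  -- rewrite RHS
  have hRHS : (2 : ℝ) ^ ((N : ℝ) * binEnt p) = (p ^ m * (1 - p) ^ (N - m))⁻¹ := by
    have h2 : (1:ℝ) < 2 := one_lt_two
    have : (N : ℝ) * binEnt p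
        = (-(m:ℝ)) * Real.logb 2 p + (-(((N - m : ℕ)):ℝ)) * Real.logb 2 (1 - p) := by
      unfold binEnt
      rw [← hNp, ← hN1p]; ring
    rw [this, Real.rpow_add (by norm_num), mul_comm (-(m:ℝ)), mul_comm (-(((N-m:ℕ)):ℝ)),
      Real.rpow_mul (by norm_num), Real.rpow_mul (by norm_num),
      Real.rpow_logb (by norm_num) (by norm_num) hp0,
      Real.rpow_logb (by norm_num) (by norm_num) h1p,
      Real.rpow_neg hp0.le, Real.rpow_neg h1p.le,
      Real.rpow_natCast, Real.rpow_natCast, mul_inv]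
  rw [hRHS, ← one_div]
  exact (le_div_iff₀ hw).mpr key
end
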